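/- arXiv:2309.03410 — 2 statements merged into one kernel-verified Lean document; each statement's English description precedes it below -/
import Mathlib

section
/- For every positive integer n, every nonnegative integer p, and every t = (t_1,…,t_n) ∈ ℂ^n, the Laguerre polynomial with parameter n satisfies L_p^{(n)}(t_1 + ⋯ + t_n) = Σ_{k ∈ ℕ_0^n, |k| ≤ p} ∏_{r=1}^{n} L_{k_r}(t_r), where L_j = L_j^{(0)} is the ordinary Laguerre polynomial and |k| = k_1 + ⋯ + k_n. -/
/-!
For a natural number `a`, the generating function `∑ₘ L_m^{(a)}(x) zᵐ` is the formal power series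
`(1 - z)^{-(a+1)} exp(-x z / (1 - z))`; its exponential factor is `exp(-x z)` with `z / (1 - z)`
substituted for `z`, and substitution is a ring homomorphism. Hence the generating functions
multiply as `G_a(x) G_b(y) = G_{a+b+1}(x + y)`, so that
`G_n(t₁ + ⋯ + tₙ) = (1 - z)⁻¹ ∏ᵣ G_0(tᵣ)`. Multiplying by `(1 - z)⁻¹` turns coefficients into
partial sums, so the coefficient of `zᵖ` is the stated sum over `|k| ≤ p`.
-/

open Finset

/-- Generalized binomial coefficient `C(n+α, n-j)`. -/
noncomputable def genBinom (α : ℝ) (n j : ℕ) : ℝ :=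
  (∏ i ∈ Finset.range (n - j), ((n : ℝ) + α - i)) / (Nat.factorial (n - j))

/-- Generalized Laguerre polynomial `L_n^{(α)}(x) = ∑_{j=0}^n (-1)^j C(n+α, n-j) x^j / j!`. -/
noncomputable def genLaguerre (α : ℝ) (n : ℕ) (x : ℂ) : ℂ :=
  ∑ j ∈ Finset.range (n + 1),
    (-1) ^ j * ((genBinom α n j : ℝ) : ℂ) * x ^ j / (Nat.factorial j)

open PowerSeries

theorem genBinom_natCast (a m j : ℕ) : genBinom a m j = (m + a).choose (m - j) := by
  rw [genBinom, Nat.cast_choose_eq_descPochhammer_div, descPochhammer_eval_eq_prod_range]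
  push_cast
  rfl

section CommSemiring

variable {R : Type*} [CommSemiring R]

theorem coeff_mk_one_mul (g : R⟦X⟧) (p : ℕ) :
    coeff p (PowerSeries.mk 1 * g) = ∑ j ∈ range (p + 1), coeff j g := by
  rw [mul_comm, coeff_mul,
    Nat.sum_antidiagonal_eq_sum_range_succ fun i j => coeff i g * coeff j (PowerSeries.mk 1)]
  simp

theorem coeff_prod_eq_sum_piAntidiag {ι : Type*} [Fintype ι] [DecidableEq ι] (f : ι → R⟦X⟧)
    (j : ℕ) : coeff j (∏ i, f i) = ∑ k ∈ piAntidiag univ j, ∏ i, coeff (k i) (f i) := by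
  rw [coeff_prod, finsuppAntidiag, sum_map]
  exact sum_attach (piAntidiag univ j) fun k => ∏ i, coeff (k i) (f i)

theorem coeff_mk_one_mul_prod {ι : Type*} [Fintype ι] [DecidableEq ι] (f : ι → R⟦X⟧) (p : ℕ) :
    coeff p (PowerSeries.mk 1 * ∏ i, f i) =
      ∑ k ∈ (Fintype.piFinset fun _ : ι => range (p + 1)).filter (fun k => ∑ i, k i ≤ p),
        ∏ i, coeff (k i) (f i) := by
  rw [coeff_mk_one_mul, ← sum_fiberwise_of_maps_to (g := fun k : ι → ℕ => ∑ i, k i)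
    (s := (Fintype.piFinset fun _ : ι => range (p + 1)).filter (fun k => ∑ i, k i ≤ p))
    (t := range (p + 1)) fun k hk => mem_range.2 (Nat.lt_succ_of_le (mem_filter.1 hk).2)]
  refine sum_congr rfl fun j hj => ?_
  rw [coeff_prod_eq_sum_piAntidiag]
  congr 1
  ext k
  simp only [mem_piAntidiag, mem_filter, Fintype.mem_piFinset, mem_range, mem_univ,
    implies_true, and_true]
  have hjp : j ≤ p := Nat.lt_succ_iff.1 (mem_range.1 hj)
  change ∑ i, k i = j ↔ _
  constructor
  · rintro rfl
    exact ⟨⟨fun i => Nat.lt_succ_of_le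
      ((single_le_sum (fun i _ => Nat.zero_le (k i)) (mem_univ i)).trans hjp), hjp⟩, rfl⟩
  · exact fun h => h.2

end CommSemiring

section CommRing

variable {R : Type*} [CommRing R]

theorem coeff_subst_eq_sum_range {q : R⟦X⟧} (hq : constantCoeff q = 0) (f : R⟦X⟧) {m N : ℕ}
    (hmN : m < N) : coeff m (f.subst q) = ∑ d ∈ range N, coeff d f * coeff m (q ^ d) := by
  rw [coeff_subst' (HasSubst.of_constantCoeff_zero' hq)]
  refine finsum_eq_sum_of_support_subset _ fun d hd => mem_range.2 ?_
  obtain ⟨r, rfl⟩ := X_dvd_iff.2 hq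
  by_contra! hNd
  rw [Function.mem_support, mul_pow, coeff_X_pow_mul', if_neg (by omega), smul_zero] at hd
  exact hd rfl

theorem coeff_mul_subst (P f : R⟦X⟧) {q : R⟦X⟧} (hq : constantCoeff q = 0) (m : ℕ) :
    coeff m (P * f.subst q) = ∑ d ∈ range (m + 1), coeff d f * coeff m (P * q ^ d) := by
  simp_rw [coeff_mul, mul_sum]
  rw [sum_comm]
  refine sum_congr rfl fun ik hik => ?_
  rw [coeff_subst_eq_sum_range hq f (N := m + 1) (by have := mem_antidiagonal.1 hik; omega),
    mul_sum]
  exact sum_congr rfl fun d _ => by ring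

theorem coeff_mk_one_pow_mul_subst (a : ℕ) (f : R⟦X⟧) (m : ℕ) :
    coeff m (PowerSeries.mk 1 ^ (a + 1) * f.subst (X * PowerSeries.mk 1 : R⟦X⟧)) =
      ∑ d ∈ range (m + 1), ((m + a).choose (m - d) : R) * coeff d f := by
  rw [coeff_mul_subst _ _ (by simp)]
  refine sum_congr rfl fun d hd => ?_
  have hdm : d ≤ m := Nat.lt_succ_iff.1 (mem_range.1 hd)
  have hpow : (PowerSeries.mk 1 : R⟦X⟧) ^ (a + 1) * (X * PowerSeries.mk 1) ^ d =
      X ^ d * PowerSeries.mk 1 ^ (a + d + 1) := by ring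
  rw [hpow, coeff_X_pow_mul', if_pos hdm, mk_one_pow_eq_mk_choose_add, coeff_mk,
    show a + d + (m - d) = m + a by omega,
    Nat.choose_symm_of_eq_add (by omega : m + a = a + d + (m - d)), mul_comm]

end CommRing

noncomputable def laguerreSeries (a : ℕ) (x : ℂ) : ℂ⟦X⟧ :=
  PowerSeries.mk fun m => genLaguerre a m x

theorem laguerreSeries_eq (a : ℕ) (x : ℂ) :
    laguerreSeries a x = PowerSeries.mk 1 ^ (a + 1) *
      (rescale (-x) (exp ℂ)).subst (X * PowerSeries.mk 1 : ℂ⟦X⟧) := by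
  ext m
  rw [laguerreSeries, coeff_mk, coeff_mk_one_pow_mul_subst, genLaguerre]
  refine sum_congr rfl fun d _ => ?_
  rw [genBinom_natCast, coeff_rescale, coeff_exp]
  simp only [map_div₀, map_one, map_natCast]
  push_cast
  ring

theorem laguerreSeries_mul (a b : ℕ) (x y : ℂ) :
    laguerreSeries a x * laguerreSeries b y = laguerreSeries (a + b + 1) (x + y) := by
  have hq : HasSubst (X * PowerSeries.mk 1 : ℂ⟦X⟧) := HasSubst.of_constantCoeff_zero' (by simp)
  rw [laguerreSeries_eq, laguerreSeries_eq, laguerreSeries_eq, mul_mul_mul_comm, ← pow_add,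
    ← subst_mul hq, exp_mul_exp_eq_exp_add, neg_add, show a + 1 + (b + 1) = a + b + 1 + 1 by ring]

theorem laguerreSeries_zero_zero : laguerreSeries 0 0 = PowerSeries.mk 1 := by
  have hq : HasSubst (X * PowerSeries.mk 1 : ℂ⟦X⟧) := HasSubst.of_constantCoeff_zero' (by simp)
  rw [laguerreSeries_eq, neg_zero, rescale_zero, RingHom.comp_apply, constantCoeff_exp, map_one,
    ← coe_substAlgHom hq, map_one, zero_add, pow_one, mul_one]

theorem laguerreSeries_sum {ι : Type*} [DecidableEq ι] (s : Finset ι) (t : ι → ℂ) :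
    laguerreSeries #s (∑ i ∈ s, t i) = PowerSeries.mk 1 * ∏ i ∈ s, laguerreSeries 0 (t i) := by
  induction s using Finset.induction_on with
  | empty => simp [laguerreSeries_zero_zero]
  | insert i s hi ih =>
    rw [card_insert_of_notMem hi, sum_insert hi, prod_insert hi, add_comm (t i),
      ← add_zero #s, ← laguerreSeries_mul, ih]
    ring

theorem laguerre_multiindex_decomposition_general (n : ℕ) (p : ℕ) (t : Fin n → ℂ) :
    genLaguerre (n : ℝ) p (∑ r, t r) =
      ∑ k ∈ (Fintype.piFinset fun _ : Fin n => Finset.range (p + 1)).filter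
          (fun k => ∑ r, k r ≤ p),
        ∏ r, genLaguerre 0 (k r) (t r) := by
  have h := congrArg (coeff p) (laguerreSeries_sum univ t)
  rw [card_univ, Fintype.card_fin, coeff_mk_one_mul_prod] at h
  simpa [laguerreSeries] using h

/-- Decomposition of the generalized Laguerre polynomial `L_p^{(n)}` of a sum of `n`
variables into a sum of products of ordinary Laguerre polynomials `L_j = L_j^{(0)}`
over multiindices `k ∈ ℕ₀ⁿ` with `|k| ≤ p`. -/
theorem laguerre_multiindex_decomposition (n : ℕ) (hn : 0 < n) (p : ℕ) (t : Fin n → ℂ) :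
    genLaguerre (n : ℝ) p (∑ r, t r) =
      ∑ k ∈ (Fintype.piFinset fun _ : Fin n => Finset.range (p + 1)).filter
          (fun k => ∑ r, k r ≤ p),
        ∏ r, genLaguerre 0 (k r) (t r) :=
  laguerre_multiindex_decomposition_general n p t
end

section
/- For all z, w ∈ ℂ^n and α > 0, the kernel e^{α⟨w,z⟩} L_{m-1}^{(n)}(α|w-z|²) equals the sum Σ_{k ∈ ℕ_0^n, |k| ≤ m-1} ∏_{r=1}^{n} e^{α w_r conj(z_r)} L_{k_r}(α|w_r - z_r|²), where L_j is the ordinary Laguerre polynomial. -/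
/-!
For natural `n`, `L_N^{(n)}(∑ xᵣ) = ∑_{|k| ≤ N} ∏ L_{kᵣ}(xᵣ)`, by induction on `n` from the
addition formula `L_N^{(a+b+1)}(x + y) = ∑_{i+j=N} L_i^{(a)}(x) L_j^{(b)}(y)`. The addition formula
follows by expanding `L_N^{(a)}(x) = ∑_{p+u=N} (-x)^p/p! · C(p+a+u, u)`: the coefficient of
`x^p y^q` is a Chu–Vandermonde sum of `multichoose`s. The exponential factor splits as a product
over the coordinates since `⟨w, z⟩ = ∑ wᵣ conj zᵣ`.
-/

open Finset

open Nat

theorem Ring.multichoose_add {R : Type*} [CommRing R] [BinomialRing R] (r s : R) (n : ℕ) :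
    Ring.multichoose (r + s) n =
      ∑ ij ∈ antidiagonal n, Ring.multichoose r ij.1 * Ring.multichoose s ij.2 := by
  have h := Ring.add_choose_eq (r := -r) (s := -s) n (Commute.all _ _)
  rw [← neg_add, Ring.choose_neg'] at h
  rw [← smul_left_cancel_iff (Int.negOnePow n), h, smul_sum]
  refine sum_congr rfl fun ij hij => ?_
  rw [Ring.choose_neg', Ring.choose_neg', smul_mul_smul_comm, ← Int.negOnePow_add,
    ← Nat.cast_add, HasAntidiagonal.mem_antidiagonal.mp hij]

theorem add_pow_div_factorial {K : Type*} [Field K] [CharZero K] (x y : K) (n : ℕ) :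
    (x + y) ^ n / n ! = ∑ ij ∈ antidiagonal n, x ^ ij.1 / ij.1 ! * (y ^ ij.2 / ij.2 !) := by
  rw [(Commute.all x y).add_pow', sum_div]
  refine sum_congr rfl fun ij hij => ?_
  rw [← HasAntidiagonal.mem_antidiagonal.mp hij, nsmul_eq_mul, Nat.cast_add_choose]
  have := (ij.1 + ij.2).factorial_ne_zero
  field_simp

theorem sum_antidiagonal_regroup {M : Type*} [AddCommMonoid M] (f : ℕ → ℕ → ℕ → ℕ → M)
    (N : ℕ) :
    ∑ ij ∈ antidiagonal N, ∑ pu ∈ antidiagonal ij.1, ∑ qv ∈ antidiagonal ij.2,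
        f pu.1 pu.2 qv.1 qv.2 =
      ∑ sm ∈ antidiagonal N, ∑ pq ∈ antidiagonal sm.1, ∑ uv ∈ antidiagonal sm.2,
        f pq.1 uv.1 pq.2 uv.2 := by
  rw [sum_sigma', sum_sigma', sum_sigma', sum_sigma']
  -- transposing the array `[[p, u], [q, v]]` of summation indices is an involution
  let transpose : ∀ x : (_ : (_ : ℕ × ℕ) × ℕ × ℕ) × ℕ × ℕ, (_ : (_ : ℕ × ℕ) × ℕ × ℕ) × ℕ × ℕ :=
    fun x => ⟨⟨(x.1.2.1 + x.2.1, x.1.2.2 + x.2.2), (x.1.2.1, x.2.1)⟩, (x.1.2.2, x.2.2)⟩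
  refine sum_nbij' transpose transpose ?_ ?_ ?_ ?_ (fun _ _ => rfl) <;>
    rintro ⟨⟨⟨i, j⟩, p, u⟩, q, v⟩ h <;>
    simp only [mem_sigma, HasAntidiagonal.mem_antidiagonal] at h <;>
    obtain ⟨⟨rfl, rfl⟩, rfl⟩ := h <;>
    simp only [transpose, mem_sigma, HasAntidiagonal.mem_antidiagonal, and_true] <;>
    omega

theorem genBinom_eq_multichoose (a : ℝ) {N j : ℕ} (h : j ≤ N) :
    genBinom a N j = Ring.multichoose ((j : ℝ) + a + 1) (N - j) := by
  have hchoose :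
      Ring.choose ((N : ℝ) + a) (N - j) = Ring.multichoose ((j : ℝ) + a + 1) (N - j) := by
    rw [Ring.choose, Nat.cast_sub h]; congr 1; ring
  rw [← hchoose, Ring.choose_eq_smul, genBinom, smul_eq_mul, div_eq_inv_mul]
  congr 1
  rw [← descPochhammer_eval_eq_prod_range, ← Polynomial.aeval_eq_smeval, Polynomial.aeval_def,
    ← Polynomial.eval_map, descPochhammer_map]

theorem genLaguerre_eq_sum_antidiagonal (a : ℝ) (N : ℕ) (x : ℂ) :
    genLaguerre a N x = ∑ pu ∈ antidiagonal N,
      (-x) ^ pu.1 / pu.1 ! * ((Ring.multichoose ((pu.1 : ℝ) + a + 1) pu.2 : ℝ) : ℂ) := by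
  rw [genLaguerre, Nat.sum_antidiagonal_eq_sum_range_succ
    (fun p u => (-x) ^ p / p ! * ((Ring.multichoose ((p : ℝ) + a + 1) u : ℝ) : ℂ))]
  refine sum_congr rfl fun p hp => ?_
  rw [genBinom_eq_multichoose a (Nat.le_of_lt_succ (mem_range.mp hp)), neg_pow]
  ring

theorem genLaguerre_apply_zero (a : ℝ) (N : ℕ) :
    genLaguerre a N 0 = (Ring.multichoose (a + 1) N : ℝ) := by
  rw [genLaguerre, sum_range_succ', sum_eq_zero fun j _ => by simp,
    genBinom_eq_multichoose a N.zero_le]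
  simp

theorem genLaguerre_add (a b : ℝ) (N : ℕ) (x y : ℂ) :
    genLaguerre (a + b + 1) N (x + y) =
      ∑ ij ∈ antidiagonal N, genLaguerre a ij.1 x * genLaguerre b ij.2 y := by
  simp_rw [genLaguerre_eq_sum_antidiagonal, sum_mul_sum]
  rw [sum_antidiagonal_regroup (fun p u q v =>
    (-x) ^ p / p ! * ((Ring.multichoose ((p : ℝ) + a + 1) u : ℝ) : ℂ) *
      ((-y) ^ q / q ! * ((Ring.multichoose ((q : ℝ) + b + 1) v : ℝ) : ℂ)))]
  refine sum_congr rfl fun sM _ => ?_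
  rw [neg_add, add_pow_div_factorial, sum_mul]
  refine sum_congr rfl fun pq hpq => ?_
  have hparam : ((pq.1 + pq.2 : ℕ) : ℝ) + (a + b + 1) + 1 = (pq.1 + a + 1) + (pq.2 + b + 1) := by
    push_cast; ring
  rw [← HasAntidiagonal.mem_antidiagonal.mp hpq, hparam, Ring.multichoose_add, Complex.ofReal_sum,
    mul_sum]
  refine sum_congr rfl fun uv _ => ?_
  push_cast
  ring

def boundedTuples (n N : ℕ) : Finset (Fin n → ℕ) :=
  (Fintype.piFinset fun _ : Fin n => range (N + 1)).filter (fun k => ∑ r, k r ≤ N)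

theorem mem_boundedTuples {n N : ℕ} {k : Fin n → ℕ} :
    k ∈ boundedTuples n N ↔ ∑ r, k r ≤ N := by
  simp only [boundedTuples, mem_filter, Fintype.mem_piFinset, mem_range, and_iff_right_iff_imp]
  exact fun h r =>
    Nat.lt_succ_of_le ((single_le_sum (fun _ _ => Nat.zero_le _) (mem_univ r)).trans h)

theorem sum_boundedTuples_succ {M : Type*} [AddCommMonoid M] (n N : ℕ)
    (f : (Fin (n + 1) → ℕ) → M) :
    ∑ k ∈ boundedTuples (n + 1) N, f k =
      ∑ ij ∈ antidiagonal N, ∑ k ∈ boundedTuples n ij.2, f (Fin.cons ij.1 k) := by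
  rw [sum_sigma']
  refine sum_nbij' (fun k => ⟨(k 0, N - k 0), Fin.tail k⟩) (fun x => Fin.cons x.1.1 x.2)
    ?_ ?_ ?_ ?_ ?_
  · intro k hk
    rw [mem_boundedTuples, Fin.sum_univ_succ] at hk
    simp only [mem_sigma, HasAntidiagonal.mem_antidiagonal, mem_boundedTuples, Fin.tail]
    omega
  · rintro ⟨⟨i, j⟩, k⟩ h
    simp only [mem_sigma, HasAntidiagonal.mem_antidiagonal, mem_boundedTuples] at h ⊢
    rw [Fin.sum_cons]
    omega
  · intro k _
    exact Fin.cons_self_tail k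
  · rintro ⟨⟨i, j⟩, k⟩ h
    simp only [mem_sigma, HasAntidiagonal.mem_antidiagonal] at h
    simp only [Fin.cons_zero, ← h.1, add_tsub_cancel_left, Fin.tail_cons]
  · intro k _
    rw [Fin.cons_self_tail]

theorem sum_boundedTuples_prod_genLaguerre (n N : ℕ) (x : Fin n → ℂ) :
    ∑ k ∈ boundedTuples n N, ∏ r, genLaguerre 0 (k r) (x r) = genLaguerre n N (∑ r, x r) := by
  induction n generalizing N with
  | zero =>
    rw [Fin.sum_univ_zero, CharP.cast_eq_zero, genLaguerre_apply_zero, zero_add,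
      Ring.multichoose_one]
    simp [boundedTuples]
  | succ n ih =>
    rw [sum_boundedTuples_succ, Fin.sum_univ_succ, Nat.cast_succ, ← zero_add (n : ℝ),
      genLaguerre_add]
    refine sum_congr rfl fun ij _ => ?_
    simp only [Fin.prod_univ_succ, Fin.cons_zero, Fin.cons_succ, ← mul_sum, ih]

open ComplexConjugate in
theorem kernel_decomposition_general (n m : ℕ) (hm : 0 < m) (α : ℝ)
    (z w : Fin n → ℂ) :
    Complex.exp ((α : ℂ) * ∑ r, w r * conj (z r)) *
        genLaguerre (n : ℝ) (m - 1) ((α : ℂ) * ((∑ r, ‖w r - z r‖ ^ 2 : ℝ) : ℂ))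
      = ∑ k ∈ (Fintype.piFinset fun _ : Fin n => Finset.range m).filter
            (fun k => ∑ r, k r ≤ m - 1),
          ∏ r, Complex.exp ((α : ℂ) * w r * conj (z r)) *
            genLaguerre 0 (k r) ((α : ℂ) * ((‖w r - z r‖ ^ 2 : ℝ) : ℂ)) := by
  obtain ⟨N, rfl⟩ : ∃ N, m = N + 1 := ⟨m - 1, (Nat.succ_pred_eq_of_pos hm).symm⟩
  have hexp : ∏ r, Complex.exp ((α : ℂ) * w r * conj (z r)) =
      Complex.exp ((α : ℂ) * ∑ r, w r * conj (z r)) := by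
    rw [← Complex.exp_sum, mul_sum]
    simp only [mul_assoc]
  have harg : (α : ℂ) * ((∑ r, ‖w r - z r‖ ^ 2 : ℝ) : ℂ) =
      ∑ r, (α : ℂ) * ((‖w r - z r‖ ^ 2 : ℝ) : ℂ) := by
    rw [Complex.ofReal_sum, mul_sum]
  rw [Nat.add_sub_cancel, harg, ← sum_boundedTuples_prod_genLaguerre, mul_sum]
  refine sum_congr rfl fun k _ => ?_
  rw [prod_mul_distrib, hexp]

open ComplexConjugate in
/-- Decomposition of the kernel `e^{α⟨w,z⟩} L_{m-1}^{(n)}(α|w-z|²)` into a sum over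
multiindices `k` with `|k| ≤ m-1` of products of one-dimensional factors involving
ordinary Laguerre polynomials `L_j = L_j^{(0)}`. -/
theorem kernel_decomposition (n m : ℕ) (hn : 0 < n) (hm : 0 < m) (α : ℝ) (hα : 0 < α)
    (z w : Fin n → ℂ) :
    Complex.exp ((α : ℂ) * ∑ r, w r * conj (z r)) *
        genLaguerre (n : ℝ) (m - 1) ((α : ℂ) * ((∑ r, ‖w r - z r‖ ^ 2 : ℝ) : ℂ))
      = ∑ k ∈ (Fintype.piFinset fun _ : Fin n => Finset.range m).filter
            (fun k => ∑ r, k r ≤ m - 1),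
          ∏ r, Complex.exp ((α : ℂ) * w r * conj (z r)) *
            genLaguerre 0 (k r) ((α : ℂ) * ((‖w r - z r‖ ^ 2 : ℝ) : ℂ)) :=
  kernel_decomposition_general n m hm α z w
end
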